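/- Let [a], [b] ∈ Λ₂ with |Supp(a) ∪ Supp(b)| = 3. Then mult(a,b) = 3, and Λ(a,b) consists of exactly one class [c] ∈ Λ₂, whose support is the symmetric difference Supp(c) = (Supp(a) ∪ Supp(b)) \ (Supp(a) ∩ Supp(b)). -/
import Mathlib


open Complex

noncomputable section

namespace G31

/-- Vectors `a = (a₁,a₂,a₃,a₄) ∈ ℂ⁴`. -/
abbrev V : Type := Fin 4 → ℂ

/-- `μ₄ ⊂ ℂ`, the group of fourth roots of unity `{1, i, -1, -i}`. -/
def mu4 : Set ℂ := {z : ℂ | z ^ 4 = 1}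

/-- `Ψ = μ₄ ∪ {0}`. -/
def Psi : Set ℂ := insert 0 mu4

/-- `a ∈ Ψ⁴`. -/
def PsiV (a : V) : Prop := ∀ k, a k ∈ Psi

/-- The diagonal multiplicative action of `μ₄` on `ℂ⁴`: `a ~ b` iff `b = ξ • a` for some
`ξ ∈ μ₄`. -/
def rel (a b : V) : Prop := ∃ ξ : ℂ, ξ ^ 4 = 1 ∧ b = ξ • a

theorem rel_refl (a : V) : rel a a := ⟨1, by norm_num, by simp⟩

theorem rel_symm {a b : V} (h : rel a b) : rel b a := by
  obtain ⟨ξ, hξ, rfl⟩ := h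
  refine ⟨ξ ^ 3, by rw [show (ξ ^ 3) ^ 4 = (ξ ^ 4) ^ 3 by ring, hξ, one_pow], ?_⟩
  rw [smul_smul, show ξ ^ 3 * ξ = ξ ^ 4 by ring, hξ, one_smul]

theorem rel_trans {a b c : V} (h : rel a b) (h' : rel b c) : rel a c := by
  obtain ⟨ξ, hξ, rfl⟩ := h
  obtain ⟨η, hη, rfl⟩ := h'
  exact ⟨η * ξ, by rw [mul_pow, hξ, hη, one_mul], by rw [smul_smul]⟩

/-- The setoid on `ℂ⁴` given by the diagonal `μ₄`-action. -/
def phiSetoid : Setoid V := ⟨rel, rel_refl, rel_symm, rel_trans⟩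

/-- `Φ`, the quotient of `Ψ⁴` (here of `ℂ⁴`) by the diagonal `μ₄`-action. -/
def Phi : Type := Quotient phiSetoid

/-- The class `[a] ∈ Φ` of `a`. -/
def cls (a : V) : Phi := Quotient.mk phiSetoid a

/-- `Supp a = {k : aₖ ≠ 0}`. -/
def Supp (a : V) : Set (Fin 4) := {k | a k ≠ 0}

/-- `prod a = a₁a₂a₃a₄`. -/
def prod4 (a : V) : ℂ := ∏ k, a k

/-- The hyperplane `X_a = {x : ∑ aₖ xₖ = 0} ⊂ ℂ⁴`. -/
def Xa (a : V) : Set V := {x | ∑ k, a k * x k = 0}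

/-- The support of a class `[a] ∈ Φ` (independent of the representative). -/
def SuppC (c : Phi) : Set (Fin 4) := {k | ∃ a : V, cls a = c ∧ a k ≠ 0}

/-- `Λ₁ = {[a] : a ∈ Ψ⁴, |Supp a| = 1}`. -/
def Lambda1 : Set Phi := {c | ∃ a : V, cls a = c ∧ PsiV a ∧ (Supp a).ncard = 1}

/-- `Λ₂ = {[a] : a ∈ Ψ⁴, |Supp a| = 2}`. -/
def Lambda2 : Set Phi := {c | ∃ a : V, cls a = c ∧ PsiV a ∧ (Supp a).ncard = 2}

/-- `Λ₃ = {[a] : a ∈ Ψ⁴, |Supp a| = 4, prod a = ±1}`. -/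
def Lambda3 : Set Phi :=
  {c | ∃ a : V, cls a = c ∧ PsiV a ∧ (Supp a).ncard = 4 ∧ (prod4 a = 1 ∨ prod4 a = -1)}

/-- `Λ = Λ₁ ⊔ Λ₂ ⊔ Λ₃`, the hyperplanes of the reflection arrangement of type `G₃₁`. -/
def Lambda : Set Phi := Lambda1 ∪ Lambda2 ∪ Lambda3

/-- `Λ̂(a,b) = {[c] ∈ Λ : X_c ⊇ X_a ∩ X_b}` (all notions independent of representatives). -/
def LambdaHat (A B : Phi) : Set Phi :=
  {c | c ∈ Lambda ∧ ∃ xa xb xc : V, cls xa = A ∧ cls xb = B ∧ cls xc = c ∧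
    Xa xa ∩ Xa xb ⊆ Xa xc}

/-- `mult(a,b) = |Λ̂(a,b)|`. -/
def mult (A B : Phi) : ℕ := (LambdaHat A B).ncard

/-- `Λ(a,b) = Λ̂(a,b) \ {[a],[b]}`. -/
def LambdaAB (A B : Phi) : Set Phi := LambdaHat A B \ {A, B}

/-- `Λ_{j'}^m(a) = {[b] ∈ Λ_{j'} : [b] ≠ [a], mult(a,b) = m}`, where `S` stands for `Λ_{j'}`. -/
def LambdaPow (S : Set Phi) (m : ℕ) (A : Phi) : Set Phi :=
  {B | B ∈ S ∧ B ≠ A ∧ mult A B = m}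

/-- `diff([a],[b]) = min_ξ |Supp (ξ a − b)|`, the minimum over representatives. -/
def diffC (A B : Phi) : ℕ :=
  sInf {n | ∃ a b : V, cls a = A ∧ cls b = B ∧ (Supp (a - b)).ncard = n}

end G31
namespace G31


lemma cls_eq_iff {a b : V} : cls a = cls b ↔ rel a b :=
  ⟨fun h => Quotient.exact h, fun h => Quotient.sound h⟩

lemma xi_ne {ξ : ℂ} (h : ξ ^ 4 = 1) : ξ ≠ 0 := by
  intro h0; rw [h0] at h; norm_num at h

lemma rel_supp {a b : V} (h : rel a b) : Supp b = Supp a := by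
  obtain ⟨ξ, hξ, rfl⟩ := h
  ext m
  simp [Supp, xi_ne hξ]

lemma rel_psiv {a b : V} (h : rel a b) (ha : PsiV a) : PsiV b := by
  obtain ⟨ξ, hξ, rfl⟩ := h
  intro m
  have := ha m
  simp only [Psi, mu4, Set.mem_insert_iff, Set.mem_setOf_eq] at this ⊢
  rcases this with h0 | h1
  · left; simp [h0]
  · right
    rw [Pi.smul_apply, smul_eq_mul, mul_pow, hξ, h1, one_mul]

lemma rel_Xa {a b : V} (h : rel a b) : Xa b = Xa a := by
  obtain ⟨ξ, hξ, rfl⟩ := h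
  ext x
  have hsum : ∑ k, ξ * a k * x k = ξ * ∑ k, a k * x k := by
    rw [Finset.mul_sum]
    exact Finset.sum_congr rfl fun m _ => (mul_assoc _ _ _)
  simp only [Xa, Set.mem_setOf_eq, Pi.smul_apply, smul_eq_mul, hsum,
    mul_eq_zero, xi_ne hξ, false_or]

lemma pow4_of_psiv {a : V} (ha : PsiV a) {m : Fin 4} (h : a m ≠ 0) : (a m) ^ 4 = 1 := by
  have := ha m
  simp only [Psi, mu4, Set.mem_insert_iff, Set.mem_setOf_eq] at this
  tauto

lemma sum_three {i j k : Fin 4} (hij : i ≠ j) (hik : i ≠ k) (hjk : j ≠ k)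
    (f : Fin 4 → ℂ) (h0 : ∀ m, m ≠ i → m ≠ j → m ≠ k → f m = 0) :
    ∑ m, f m = f i + f j + f k := by
  have hsub : ∑ m, f m = ∑ m ∈ ({i, j, k} : Finset (Fin 4)), f m := by
    refine (Finset.sum_subset (Finset.subset_univ _) ?_).symm
    intro m _ hm
    simp only [Finset.mem_insert, Finset.mem_singleton, not_or] at hm
    exact h0 m hm.1 hm.2.1 hm.2.2
  rw [hsub, Finset.sum_insert (by simp [hij, hik]),
    Finset.sum_insert (by simp [hjk]), Finset.sum_singleton]
  ring

lemma SuppC_cls (a : V) : SuppC (cls a) = Supp a := by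
  ext m
  simp only [SuppC, Set.mem_setOf_eq]
  constructor
  · rintro ⟨x, hx, hm⟩
    have h := rel_supp (cls_eq_iff.mp hx)
    rw [h]; exact hm
  · intro h; exact ⟨a, rfl, h⟩

lemma lambda2_rep {A : Phi} (hA : A ∈ Lambda2) {x : V} (hx : cls x = A) :
    PsiV x ∧ (Supp x).ncard = 2 := by
  obtain ⟨a, ha, hp, hc⟩ := hA
  have hr : rel a x := cls_eq_iff.mp (ha.trans hx.symm)
  exact ⟨rel_psiv hr hp, by rw [rel_supp hr, hc]⟩

lemma lambda_rep {c : Phi} (hc : c ∈ Lambda) {x : V} (hx : cls x = c) :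
    PsiV x ∧ ((Supp x).ncard = 1 ∨ (Supp x).ncard = 2 ∨ (Supp x).ncard = 4) := by
  rcases hc with (⟨a, ha, hp, hn⟩ | ⟨a, ha, hp, hn⟩) | ⟨a, ha, hp, hn, _⟩ <;>
    [skip; skip; skip] <;>
  · have hr : rel a x := cls_eq_iff.mp (ha.trans hx.symm)
    refine ⟨rel_psiv hr hp, ?_⟩
    rw [rel_supp hr, hn]
    tauto

/-- let `[a], [b] ∈ Λ₂` with `|Supp a ∪ Supp b| = 3`.  Then `mult(a,b) = 3` and
`Λ(a,b)` consists of exactly one class `[c] ∈ Λ₂`, whose support is the symmetric difference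
`(Supp a ∪ Supp b) \ (Supp a ∩ Supp b)`. -/
theorem stmt6 : ∀ A ∈ Lambda2, ∀ B ∈ Lambda2, ∀ a b : V, cls a = A → cls b = B →
    (Supp a ∪ Supp b).ncard = 3 →
    mult A B = 3 ∧
    ∃ C ∈ Lambda2, LambdaAB A B = {C} ∧
      SuppC C = (Supp a ∪ Supp b) \ (Supp a ∩ Supp b) := by
  intro A hA B hB a b hca hcb h3
  obtain ⟨hpa, h2a⟩ := lambda2_rep hA hca
  obtain ⟨hpb, h2b⟩ := lambda2_rep hB hcb
  -- extract indices i, j, k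
  have hkey := Set.ncard_union_add_ncard_inter (Supp a) (Supp b)
  have h1 : (Supp a ∩ Supp b).ncard = 1 := by omega
  obtain ⟨j, hj⟩ := Set.ncard_eq_one.mp h1
  have hja : j ∈ Supp a ∧ j ∈ Supp b := by
    have : j ∈ Supp a ∩ Supp b := by rw [hj]; rfl
    exact ⟨this.1, this.2⟩
  obtain ⟨i, hij, hSa⟩ : ∃ i, i ≠ j ∧ Supp a = {i, j} := by
    obtain ⟨x, y, hxy, hE⟩ := Set.ncard_eq_two.mp h2a
    have : j = x ∨ j = y := by
      have := hja.1; rw [hE] at this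
      simpa using this
    rcases this with rfl | rfl
    · exact ⟨y, fun h => hxy h.symm, by rw [hE]; exact Set.pair_comm _ _⟩
    · exact ⟨x, hxy, hE⟩
  obtain ⟨k, hkj, hSb⟩ : ∃ k, k ≠ j ∧ Supp b = {k, j} := by
    obtain ⟨x, y, hxy, hE⟩ := Set.ncard_eq_two.mp h2b
    have : j = x ∨ j = y := by
      have := hja.2; rw [hE] at this
      simpa using this
    rcases this with rfl | rfl
    · exact ⟨y, fun h => hxy h.symm, by rw [hE]; exact Set.pair_comm _ _⟩
    · exact ⟨x, hxy, hE⟩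
  have hik : i ≠ k := by
    rintro rfl
    have : i ∈ Supp a ∩ Supp b := ⟨by rw [hSa]; left; rfl, by rw [hSb]; left; rfl⟩
    rw [hj] at this
    exact hij this
  -- basic nonvanishing facts
  have hai : a i ≠ 0 := by
    have : i ∈ Supp a := by rw [hSa]; exact Set.mem_insert _ _
    exact this
  have haj : a j ≠ 0 := by
    have : j ∈ Supp a := by rw [hSa]; exact Set.mem_insert_of_mem _ rfl
    exact this
  have hbj : b j ≠ 0 := by
    have : j ∈ Supp b := by rw [hSb]; exact Set.mem_insert_of_mem _ rfl
    exact this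
  have hbk : b k ≠ 0 := by
    have : k ∈ Supp b := by rw [hSb]; exact Set.mem_insert _ _
    exact this
  have ha0 : ∀ m, m ≠ i → m ≠ j → a m = 0 := by
    intro m h1' h2'
    by_contra h
    have : m ∈ Supp a := h
    rw [hSa] at this
    rcases this with h' | h' <;> [exact h1' h'; exact h2' h']
  have hb0 : ∀ m, m ≠ k → m ≠ j → b m = 0 := by
    intro m h1' h2'
    by_contra h
    have : m ∈ Supp b := h
    rw [hSb] at this
    rcases this with h' | h' <;> [exact h1' h'; exact h2' h']
  have hak : a k = 0 := ha0 k (Ne.symm hik) hkj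
  have hbi : b i = 0 := hb0 i hik hij
  -- the third hyperplane
  set c₀ : V := fun m => if m = i then a i * b j else if m = k then -(a j * b k) else 0 with hc₀
  have hc₀i : c₀ i = a i * b j := by simp [hc₀]
  have hc₀k : c₀ k = -(a j * b k) := by simp [hc₀, hik.symm]
  have hc₀0 : ∀ m, m ≠ i → m ≠ k → c₀ m = 0 := by
    intro m h1' h2'; simp [hc₀, h1', h2']
  have hc₀j : c₀ j = 0 := hc₀0 j (Ne.symm hij) (Ne.symm hkj)
  have hSc : Supp c₀ = {i, k} := by
    ext m
    simp only [Supp, Set.mem_setOf_eq, Set.mem_insert_iff, Set.mem_singleton_iff]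
    constructor
    · intro h
      by_contra hc
      push_neg at hc
      exact h (hc₀0 m hc.1 hc.2)
    · rintro (rfl | rfl)
      · rw [hc₀i]; exact mul_ne_zero hai hbj
      · rw [hc₀k]; simpa using mul_ne_zero haj hbk
  set C : Phi := cls c₀ with hC
  have hpc : PsiV c₀ := by
    intro m
    simp only [Psi, mu4, Set.mem_insert_iff, Set.mem_setOf_eq]
    rcases eq_or_ne m i with rfl | hmi
    · right; rw [hc₀i, mul_pow, pow4_of_psiv hpa hai, pow4_of_psiv hpb hbj, one_mul]
    · rcases eq_or_ne m k with rfl | hmk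
      · right
        rw [hc₀k, neg_pow, mul_pow, pow4_of_psiv hpa haj, pow4_of_psiv hpb hbk]
        norm_num
      · left; exact hc₀0 m hmi hmk
  have hCL2 : C ∈ Lambda2 := ⟨c₀, rfl, hpc, by rw [hSc]; exact Set.ncard_pair hik⟩
  -- expansion of scalar products
  have expand : ∀ u w : V, (∀ m, m ≠ i → m ≠ j → m ≠ k → u m * w m = 0) →
      ∑ n, u n * w n = u i * w i + u j * w j + u k * w k := by
    intro u w hu
    exact sum_three hij hik hkj.symm (fun m => u m * w m) hu
  -- c₀ contains the intersection
  have hsubc : Xa a ∩ Xa b ⊆ Xa c₀ := by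
    rintro x ⟨hxa, hxb⟩
    have ea : a i * x i + a j * x j + a k * x k = 0 := by
      rw [← expand a x (fun m h1' h2' _ => by rw [ha0 m h1' h2', zero_mul])]
      exact hxa
    have eb : b i * x i + b j * x j + b k * x k = 0 := by
      rw [← expand b x (fun m _ h2' h3' => by rw [hb0 m h3' h2', zero_mul])]
      exact hxb
    show ∑ m, c₀ m * x m = 0
    rw [expand c₀ x (fun m h1' _ h3' => by rw [hc₀0 m h1' h3', zero_mul]),
      hc₀i, hc₀j, hc₀k]
    rw [hak] at ea
    rw [hbi] at eb
    linear_combination b j * ea - a j * eb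
  -- `A`, `B`, `C` are pairwise distinct
  have suppne : ∀ x y : V, cls x = cls y → Supp x = Supp y := by
    intro x y h
    exact (rel_supp (cls_eq_iff.mp h)).symm
  have hABne : A ≠ B := by
    intro h
    have := suppne a b (by rw [hca, hcb, h])
    rw [hSa, hSb] at this
    have : i ∈ ({k, j} : Set (Fin 4)) := by rw [← this]; left; rfl
    rcases this with h' | h' <;> [exact hik h'; exact hij h']
  have hCAne : C ≠ A := by
    intro h
    have := suppne c₀ a (by rw [hca]; exact h)
    rw [hSc, hSa] at this
    have : j ∈ ({i, k} : Set (Fin 4)) := by rw [this]; right; rfl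
    rcases this with h' | h' <;> [exact hij h'.symm; exact hkj h'.symm]
  have hCBne : C ≠ B := by
    intro h
    have := suppne c₀ b (by rw [hcb]; exact h)
    rw [hSc, hSb] at this
    have : j ∈ ({i, k} : Set (Fin 4)) := by rw [this]; right; rfl
    rcases this with h' | h' <;> [exact hij h'.symm; exact hkj h'.symm]
  -- the key characterization
  have hhat : LambdaHat A B = {A, B, C} := by
    apply Set.eq_of_subset_of_subset
    · rintro c ⟨hcL, xa, xb, xc, hxa, hxb, hxc, hsub⟩
      have hXa : Xa xa = Xa a := rel_Xa (cls_eq_iff.mp (hca.trans hxa.symm))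
      have hXb : Xa xb = Xa b := rel_Xa (cls_eq_iff.mp (hcb.trans hxb.symm))
      rw [hXa, hXb] at hsub
      obtain ⟨hpxc, hcard⟩ := lambda_rep hcL hxc
      -- coordinates outside {i,j,k} vanish
      have hl : ∀ m, m ≠ i → m ≠ j → m ≠ k → xc m = 0 := by
        intro m h1' h2' h3'
        have hmem : (fun n => if n = m then (1 : ℂ) else 0) ∈ Xa a ∩ Xa b := by
          constructor
          · show ∑ n, a n * _ = 0
            simp only [mul_ite, mul_one, mul_zero]
            rw [Finset.sum_ite_eq' Finset.univ m a]
            simp [ha0 m h1' h2']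
          · show ∑ n, b n * _ = 0
            simp only [mul_ite, mul_one, mul_zero]
            rw [Finset.sum_ite_eq' Finset.univ m b]
            simp [hb0 m h3' h2']
        have := hsub hmem
        have hx : ∑ n, xc n * (if n = m then (1 : ℂ) else 0) = 0 := this
        simp only [mul_ite, mul_one, mul_zero] at hx
        rwa [Finset.sum_ite_eq' Finset.univ m xc, if_pos (Finset.mem_univ m)] at hx
      -- the linear relation
      have hR : xc j * (a i * b k) = xc i * (a j * b k) + xc k * (a i * b j) := by
        set v : V := fun m => if m = i then -(a j * b k) else if m = j then a i * b k
          else if m = k then -(a i * b j) else 0 with hv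
        have hvi : v i = -(a j * b k) := by simp [hv]
        have hvj : v j = a i * b k := by simp [hv, hij.symm]
        have hvk : v k = -(a i * b j) := by simp [hv, hik.symm, hkj]
        have hv0 : ∀ m, m ≠ i → m ≠ j → m ≠ k → v m = 0 := by
          intro m h1' h2' h3'; simp [hv, h1', h2', h3']
        have hmem : v ∈ Xa a ∩ Xa b := by
          constructor
          · show ∑ n, a n * v n = 0
            rw [expand a v (fun m h1' h2' h3' => by rw [hv0 m h1' h2' h3', mul_zero]),
              hvi, hvj, hvk, hak]
            ring
          · show ∑ n, b n * v n = 0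
            rw [expand b v (fun m h1' h2' h3' => by rw [hv0 m h1' h2' h3', mul_zero]),
              hvi, hvj, hvk, hbi]
            ring
        have hx : ∑ n, xc n * v n = 0 := hsub hmem
        rw [expand xc v (fun m h1' h2' h3' => by rw [hv0 m h1' h2' h3', mul_zero]),
          hvi, hvj, hvk] at hx
        linear_combination hx
      -- case analysis
      rcases eq_or_ne (xc i) 0 with hxi | hxi
      · rcases eq_or_ne (xc k) 0 with hxk | hxk
        · -- xc = 0, impossible
          exfalso
          have hxj : xc j = 0 := by
            rw [hxi, hxk] at hR
            simp only [zero_mul, add_zero] at hR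
            exact (mul_eq_zero.mp hR).resolve_right (mul_ne_zero hai hbk)
          have : Supp xc = ∅ := by
            ext m
            simp only [Supp, Set.mem_setOf_eq, Set.mem_empty_iff_false, iff_false, not_not]
            rcases eq_or_ne m i with rfl | h1'
            · exact hxi
            · rcases eq_or_ne m j with rfl | h2'
              · exact hxj
              · rcases eq_or_ne m k with rfl | h3'
                · exact hxk
                · exact hl m h1' h2' h3'
          rw [this, Set.ncard_empty] at hcard
          omega
        · -- c = B
          have hRj : xc j * b k = xc k * b j := by
            apply mul_left_cancel₀ hai
            rw [hxi] at hR
            linear_combination hR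
          have : rel b xc := by
            refine ⟨xc k * (b k)⁻¹, ?_, ?_⟩
            · rw [mul_pow, inv_pow, pow4_of_psiv hpxc hxk, pow4_of_psiv hpb hbk]
              norm_num
            · funext m
              show xc m = xc k * (b k)⁻¹ * b m
              rcases eq_or_ne m k with rfl | h1'
              · field_simp
              · rcases eq_or_ne m j with rfl | h2'
                · field_simp
                  linear_combination hRj
                · rw [hb0 m h1' h2', mul_zero]
                  rcases eq_or_ne m i with rfl | h3'
                  · exact hxi
                  · exact hl m h3' h2' h1'
          have : c = B := by rw [← hxc, ← hcb]; exact (Quotient.sound this).symm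
          right; left; exact this
      · rcases eq_or_ne (xc k) 0 with hxk | hxk
        · -- c = A
          have hRj : xc j * a i = xc i * a j := by
            apply mul_right_cancel₀ hbk
            rw [hxk] at hR
            linear_combination hR
          have : rel a xc := by
            refine ⟨xc i * (a i)⁻¹, ?_, ?_⟩
            · rw [mul_pow, inv_pow, pow4_of_psiv hpxc hxi, pow4_of_psiv hpa hai]
              norm_num
            · funext m
              show xc m = xc i * (a i)⁻¹ * a m
              rcases eq_or_ne m i with rfl | h1'
              · field_simp
              · rcases eq_or_ne m j with rfl | h2'
                · field_simp
                  linear_combination hRj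
                · rw [ha0 m h1' h2', mul_zero]
                  rcases eq_or_ne m k with rfl | h3'
                  · exact hxk
                  · exact hl m h1' h2' h3'
          have : c = A := by rw [← hxc, ← hca]; exact (Quotient.sound this).symm
          left; exact this
        · -- c = C
          have hxj : xc j = 0 := by
            by_contra hxj
            have hsup : ({i, j, k} : Set (Fin 4)) ⊆ Supp xc := by
              rintro m (rfl | rfl | rfl) <;> assumption
            have h3' : ({i, j, k} : Set (Fin 4)).ncard = 3 := by
              rw [Set.ncard_eq_three]
              exact ⟨i, j, k, hij, hik, hkj.symm, rfl⟩
            have hle : 3 ≤ (Supp xc).ncard := by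
              rw [← h3']
              exact Set.ncard_le_ncard hsup (Set.toFinite _)
            have hub : Supp xc ⊆ ({i, j, k} : Set (Fin 4)) := by
              intro m hm
              by_contra hc'
              simp only [Set.mem_insert_iff, Set.mem_singleton_iff, not_or] at hc'
              exact hm (hl m hc'.1 hc'.2.1 hc'.2.2)
            have hge : (Supp xc).ncard ≤ 3 := by
              rw [← h3']
              exact Set.ncard_le_ncard hub (Set.toFinite _)
            omega
          have hR' : xc i * (a j * b k) + xc k * (a i * b j) = 0 := by
            rw [hxj] at hR
            linear_combination -hR
          have : rel c₀ xc := by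
            refine ⟨xc i * (a i * b j)⁻¹, ?_, ?_⟩
            · rw [mul_pow, inv_pow, pow4_of_psiv hpxc hxi, mul_pow,
                pow4_of_psiv hpa hai, pow4_of_psiv hpb hbj]
              norm_num
            · funext m
              show xc m = xc i * (a i * b j)⁻¹ * c₀ m
              rcases eq_or_ne m i with rfl | h1'
              · rw [hc₀i]; field_simp
              · rcases eq_or_ne m k with rfl | h3'
                · rw [hc₀k]
                  have hne : a i * b j ≠ 0 := mul_ne_zero hai hbj
                  field_simp
                  linear_combination hR'
                · rw [hc₀0 m h1' h3', mul_zero]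
                  rcases eq_or_ne m j with rfl | h2'
                  · exact hxj
                  · exact hl m h1' h2' h3'
          have : c = C := by rw [← hxc, hC]; exact (Quotient.sound this).symm
          right; right; exact this
    · rintro c (rfl | rfl | rfl)
      · exact ⟨Or.inl (Or.inr hA), a, b, a, hca, hcb, hca, Set.inter_subset_left⟩
      · exact ⟨Or.inl (Or.inr hB), a, b, b, hca, hcb, hcb, Set.inter_subset_right⟩
      · exact ⟨Or.inl (Or.inr hCL2), a, b, c₀, hca, hcb, rfl, hsubc⟩
  constructor
  · rw [mult, hhat]
    rw [Set.ncard_eq_three]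
    exact ⟨A, B, C, hABne, hCAne.symm, hCBne.symm, rfl⟩
  · refine ⟨C, hCL2, ?_, ?_⟩
    · rw [LambdaAB, hhat]
      ext x
      simp only [Set.mem_diff, Set.mem_insert_iff, Set.mem_singleton_iff, not_or]
      constructor
      · rintro ⟨h1' | h1' | h1', h2', h3'⟩
        · exact absurd h1' h2'
        · exact absurd h1' h3'
        · exact h1'
      · rintro rfl
        exact ⟨Or.inr (Or.inr rfl), hCAne, hCBne⟩
    · rw [hC, SuppC_cls, hSc, hSa, hSb]
      ext m
      simp only [Set.mem_insert_iff, Set.mem_singleton_iff, Set.mem_diff,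
        Set.mem_union, Set.mem_inter_iff, not_and, not_or]
      constructor
      · rintro (rfl | rfl)
        · exact ⟨Or.inl (Or.inl rfl), fun h => ⟨hik, hij⟩⟩
        · refine ⟨Or.inr (Or.inl rfl), fun h => ?_⟩
          rcases h with h | h
          · exact absurd h (Ne.symm hik)
          · exact absurd h hkj
      · rintro ⟨h1', h2'⟩
        rcases h1' with (rfl | rfl) | (rfl | rfl)
        · left; rfl
        · exact absurd (h2' (Or.inr rfl)).2 (fun h => h rfl)
        · right; rfl
        · exact absurd (h2' (Or.inr rfl)).2 (fun h => h rfl)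

end G31
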